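/- Let Ω ⊆ ℝⁿ be open, let L : ℝᵐ × (m×n real matrices) → ℝ be smooth (not depending on x), and let u : Ω → ℝᵐ be a smooth solution of the Euler–Lagrange equations: for each k, (∂L/∂y^k)(u, Du) = Σ_i ∂/∂x^i [ (∂L/∂q^k_i)(u, Du) ] on Ω. Then the energy-momentum tensor S with components S_{ij}(x) = Σ_k (∂L/∂q^k_i)(u(x), Du(x))·(∂u^k/∂x^j)(x) − δ_{ij}·L(u(x), Du(x)) is divergence free in its first index: Σ_i ∂S_{ij}/∂x^i = 0 on Ω for each 1 ≤ j ≤ n. -/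

import Mathlib

/-!
Write `P^k_i = L_{q^k_i}(u, Du)`. Differentiating `S_{ij} = Σ_k P^k_i ∂_j u^k - δ_{ij} L(u, Du)`
by the product rule, the terms `P^k_i ∂_i ∂_j u^k` cancel, by symmetry of second derivatives,
against the second-order part of the chain rule
`∂_j [L(u, Du)] = Σ_k L_{y^k} ∂_j u^k + Σ_{k,i} P^k_i ∂_j ∂_i u^k`.
What is left is Noether's identity `Σ_i ∂_i S_{ij} = Σ_k ∂_j u^k (Σ_i ∂_i P^k_i - L_{y^k})`,
whose right-hand side vanishes by the Euler–Lagrange equations.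
-/

noncomputable def pderiv' {n : ℕ} (i : Fin n) (f : (Fin n → ℝ) → ℝ) (x : Fin n → ℝ) : ℝ :=
  fderiv ℝ f x (Pi.single i 1)

open Filter Topology

section PartialDerivative

variable {n : ℕ} {i : Fin n} {f g : (Fin n → ℝ) → ℝ} {x : Fin n → ℝ}

theorem Filter.EventuallyEq.pderiv'_eq (h : f =ᶠ[𝓝 x] g) : pderiv' i f x = pderiv' i g x := by
  rw [pderiv', pderiv', h.fderiv_eq]

theorem pderiv'_sub (hf : DifferentiableAt ℝ f x) (hg : DifferentiableAt ℝ g x) :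
    pderiv' i (fun y => f y - g y) x = pderiv' i f x - pderiv' i g x := by
  simp [pderiv', fderiv_fun_sub hf hg]

theorem pderiv'_mul (hf : DifferentiableAt ℝ f x) (hg : DifferentiableAt ℝ g x) :
    pderiv' i (fun y => f y * g y) x = f x * pderiv' i g x + g x * pderiv' i f x := by
  simp [pderiv', fderiv_fun_mul hf hg]

theorem pderiv'_const_mul (hf : DifferentiableAt ℝ f x) (c : ℝ) :
    pderiv' i (fun y => c * f y) x = c * pderiv' i f x := by
  simp [pderiv', fderiv_const_mul hf]

theorem pderiv'_sum {ι : Type*} {s : Finset ι} {f : ι → (Fin n → ℝ) → ℝ}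
    (hf : ∀ k ∈ s, DifferentiableAt ℝ (f k) x) :
    pderiv' i (fun y => ∑ k ∈ s, f k y) x = ∑ k ∈ s, pderiv' i (f k) x := by
  simp [pderiv', fderiv_fun_sum hf]

end PartialDerivative

section

variable {E F : Type*} [NormedAddCommGroup E] [NormedSpace ℝ E] [NormedAddCommGroup F]
  [NormedSpace ℝ F] {m n : ℕ}

theorem fderiv_pi_apply {ι : Type*} [Fintype ι] {f : E → ι → F} {x : E}
    (hf : DifferentiableAt ℝ f x) (k : ι) (v : E) :
    fderiv ℝ (fun y => f y k) x v = fderiv ℝ f x v k := by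
  rw [show (fun y => f y k) = ContinuousLinearMap.proj (R := ℝ) k ∘ f from rfl,
    fderiv_comp x (ContinuousLinearMap.differentiableAt _) hf, ContinuousLinearMap.fderiv]
  rfl

theorem ContinuousLinearMap.apply_prod_eq_sum (T : (Fin m → ℝ) × (Fin m → Fin n → ℝ) →L[ℝ] ℝ)
    (a : Fin m → ℝ) (b : Fin m → Fin n → ℝ) :
    T (a, b) = ∑ k, a k * T (Pi.single k 1, 0) +
      ∑ k, ∑ i, b k i * T (0, Pi.single k (Pi.single i 1)) := by
  have ha : ((a, 0) : (Fin m → ℝ) × (Fin m → Fin n → ℝ)) = ∑ k, a k • (Pi.single k 1, 0) := by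
    ext k' <;> simp [Prod.fst_sum, Prod.snd_sum, Finset.sum_apply, Pi.single_apply]
  have hb : ((0, b) : (Fin m → ℝ) × (Fin m → Fin n → ℝ)) =
      ∑ k, ∑ i, b k i • (0, Pi.single k (Pi.single i 1)) := by
    ext k' <;> simp [Prod.fst_sum, Prod.snd_sum, Finset.sum_apply, Pi.single_apply, ite_apply]
  calc T (a, b) = T ((a, 0) + (0, b)) := by simp
    _ = _ := by rw [map_add, ha, hb]; simp only [map_sum, map_smul, smul_eq_mul]

theorem fderiv_comp_prodMk_apply_eq_sum {L : (Fin m → ℝ) × (Fin m → Fin n → ℝ) → ℝ}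
    {y : E → Fin m → ℝ} {q : E → Fin m → Fin n → ℝ} {x : E}
    (hL : DifferentiableAt ℝ L (y x, q x)) (hy : DifferentiableAt ℝ y x)
    (hq : DifferentiableAt ℝ q x) (v : E) :
    fderiv ℝ (fun x' => L (y x', q x')) x v =
      ∑ k, fderiv ℝ y x v k * fderiv ℝ L (y x, q x) (Pi.single k 1, 0) +
        ∑ k, ∑ i, fderiv ℝ q x v k i * fderiv ℝ L (y x, q x) (0, Pi.single k (Pi.single i 1)) := by
  rw [show (fun x' => L (y x', q x')) = L ∘ fun x' => (y x', q x') from rfl,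
    fderiv_comp x hL (hy.prodMk hq), ContinuousLinearMap.comp_apply, hy.fderiv_prodMk hq,
    ContinuousLinearMap.prod_apply, ContinuousLinearMap.apply_prod_eq_sum]

end

section Jacobian

variable {m n : ℕ}

noncomputable def toMatrixCLM : ((Fin n → ℝ) →L[ℝ] Fin m → ℝ) →L[ℝ] Fin m → Fin n → ℝ :=
  .pi fun k => .pi fun i => (ContinuousLinearMap.proj (R := ℝ) (φ := fun _ : Fin m => ℝ) k).comp
    (.apply ℝ (Fin m → ℝ) (Pi.single i 1))

noncomputable def jacobian (u : (Fin n → ℝ) → Fin m → ℝ) (x : Fin n → ℝ) : Fin m → Fin n → ℝ :=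
  toMatrixCLM (fderiv ℝ u x)

noncomputable def energyMomentum (L : (Fin m → ℝ) × (Fin m → Fin n → ℝ) → ℝ)
    (u : (Fin n → ℝ) → Fin m → ℝ) (x : Fin n → ℝ) (i j : Fin n) : ℝ :=
  (∑ k, fderiv ℝ L (u x, jacobian u x) (0, Pi.single k (Pi.single i 1)) * jacobian u x k j) -
    (if i = j then 1 else 0) * L (u x, jacobian u x)

noncomputable def eulerLagrange (L : (Fin m → ℝ) × (Fin m → Fin n → ℝ) → ℝ)
    (u : (Fin n → ℝ) → Fin m → ℝ) (x : Fin n → ℝ) (k : Fin m) : ℝ :=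
  (∑ i, pderiv' i (fun x' => fderiv ℝ L (u x', jacobian u x') (0, Pi.single k (Pi.single i 1))) x) -
    fderiv ℝ L (u x, jacobian u x) (Pi.single k 1, 0)

variable {L : (Fin m → ℝ) × (Fin m → Fin n → ℝ) → ℝ} {u : (Fin n → ℝ) → Fin m → ℝ}
  {x : Fin n → ℝ}

theorem ContDiffAt.jacobian {N : ℕ} (hu : ContDiffAt ℝ (N + 1) u x) :
    ContDiffAt ℝ N (jacobian u) x :=
  toMatrixCLM.contDiff.contDiffAt.comp x (hu.fderiv_right le_rfl)

theorem fderiv_jacobian_symm (hu : ContDiffAt ℝ 2 u x) (k : Fin m) (i j : Fin n) :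
    fderiv ℝ (jacobian u) x (Pi.single i 1) k j =
      fderiv ℝ (jacobian u) x (Pi.single j 1) k i := by
  have hD : DifferentiableAt ℝ (fderiv ℝ u) x :=
    (hu.fderiv_right (m := 1) le_rfl).differentiableAt one_ne_zero
  rw [show jacobian u = toMatrixCLM ∘ fderiv ℝ u from rfl,
    fderiv_comp x toMatrixCLM.differentiableAt hD, ContinuousLinearMap.fderiv]
  exact congrFun (hu.isSymmSndFDerivAt (by simp) _ _) k

/-- The second derivative `∂_i ∂_j u^k` appears as `∂_j ∂_i u^k`, the form in which the chain rule
for `∂_j [L(u, Du)]` produces it. -/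
theorem pderiv'_energyMomentum (hL : ContDiffAt ℝ 2 L (u x, jacobian u x))
    (hu : ContDiffAt ℝ 2 u x) (i j : Fin n) :
    pderiv' i (fun x' => energyMomentum L u x' i j) x =
      ∑ k, (fderiv ℝ (jacobian u) x (Pi.single j 1) k i *
          fderiv ℝ L (u x, jacobian u x) (0, Pi.single k (Pi.single i 1)) +
        jacobian u x k j * pderiv' i
          (fun x' => fderiv ℝ L (u x', jacobian u x') (0, Pi.single k (Pi.single i 1))) x) -
      (if i = j then 1 else 0) * pderiv' i (fun x' => L (u x', jacobian u x')) x := by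
  have hJ : DifferentiableAt ℝ (jacobian u) x :=
    (hu.jacobian (N := 1)).differentiableAt one_ne_zero
  have hg : ContDiffAt ℝ 1 (fun x' => (u x', jacobian u x')) x :=
    (hu.of_le one_le_two).prodMk (hu.jacobian (N := 1))
  have hLg : DifferentiableAt ℝ (fun x' => L (u x', jacobian u x')) x :=
    ((hL.of_le one_le_two).comp x hg).differentiableAt one_ne_zero
  have hP : ∀ w, DifferentiableAt ℝ (fun x' => fderiv ℝ L (u x', jacobian u x') w) x := fun w =>
    (((hL.fderiv_right le_rfl).comp x hg).differentiableAt one_ne_zero).clm_apply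
      (differentiableAt_const w)
  have hJkj : ∀ k, DifferentiableAt ℝ (fun x' => jacobian u x' k j) x := fun k =>
    differentiableAt_pi.1 (differentiableAt_pi.1 hJ k) j
  have hterm : ∀ k, DifferentiableAt ℝ (fun x' =>
      fderiv ℝ L (u x', jacobian u x') (0, Pi.single k (Pi.single i 1)) * jacobian u x' k j) x :=
    fun k => (hP _).mul (hJkj k)
  unfold energyMomentum
  rw [pderiv'_sub (.fun_sum fun k _ => hterm k) (hLg.const_mul _),
    pderiv'_sum fun k _ => hterm k, pderiv'_const_mul hLg]
  congr 1
  refine Finset.sum_congr rfl fun k _ => ?_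
  rw [pderiv'_mul (hP _) (hJkj k), pderiv', fderiv_pi_apply (differentiableAt_pi.1 hJ k),
    fderiv_pi_apply hJ, fderiv_jacobian_symm hu, mul_comm]

theorem sum_pderiv'_energyMomentum (hL : ContDiffAt ℝ 2 L (u x, jacobian u x))
    (hu : ContDiffAt ℝ 2 u x) (j : Fin n) :
    ∑ i, pderiv' i (fun x' => energyMomentum L u x' i j) x =
      ∑ k, jacobian u x k j * eulerLagrange L u x k := by
  have hchain : pderiv' j (fun x' => L (u x', jacobian u x')) x =
      ∑ k, jacobian u x k j * fderiv ℝ L (u x, jacobian u x) (Pi.single k 1, 0) +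
        ∑ k, ∑ i, fderiv ℝ (jacobian u) x (Pi.single j 1) k i *
          fderiv ℝ L (u x, jacobian u x) (0, Pi.single k (Pi.single i 1)) :=
    fderiv_comp_prodMk_apply_eq_sum (hL.differentiableAt two_ne_zero)
      (hu.differentiableAt two_ne_zero) ((hu.jacobian (N := 1)).differentiableAt one_ne_zero) _
  simp only [pderiv'_energyMomentum hL hu, Finset.sum_sub_distrib, ite_mul, one_mul, zero_mul,
    Finset.sum_ite_eq', Finset.mem_univ, if_true, hchain]
  rw [Finset.sum_comm]
  simp only [eulerLagrange, mul_sub, Finset.mul_sum, Finset.sum_add_distrib, Finset.sum_sub_distrib]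
  ring

end Jacobian

/-- The energy-momentum tensor from Noether's first theorem and translation invariance:
for a first-order Lagrangian `L(y, q)` not depending on the domain variable `x`,
and a smooth solution `u` of the Euler–Lagrange equations on an open set `Ω`, the tensor
`S_{ij} = Σ_k L_{q^k_i}(u, Du) ∂u^k/∂x^j − δ_{ij} L(u, Du)` is divergence free in its
first index. -/
theorem energy_momentum_tensor_div_free
    {n m : ℕ}
    (Ω : Set (Fin n → ℝ)) (hΩ : IsOpen Ω)
    (L : ((Fin m → ℝ) × (Fin m → Fin n → ℝ)) → ℝ)
    (hL : ContDiff ℝ (⊤ : ℕ∞) L)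
    (u : (Fin n → ℝ) → (Fin m → ℝ))
    (hu : ContDiffOn ℝ (⊤ : ℕ∞) u Ω)
    -- the Jacobian matrix `Du(x)`, with entries `(Du x) k i = ∂u^k/∂x^i`
    (Du : (Fin n → ℝ) → (Fin m → Fin n → ℝ))
    (hDu : ∀ x ∈ Ω, ∀ k i, Du x k i = fderiv ℝ u x (Pi.single i 1) k)
    -- Euler–Lagrange equations on Ω:
    -- L_{y^k}(u, Du) = Σ_i ∂/∂x^i [ L_{q^k_i}(u, Du) ]
    (hEL : ∀ x ∈ Ω, ∀ k : Fin m,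
      fderiv ℝ L (u x, Du x) (Pi.single k 1, 0) =
        ∑ i : Fin n, pderiv' i
          (fun x' => fderiv ℝ L (u x', Du x') (0, Pi.single k (Pi.single i 1))) x)
    -- the energy-momentum tensor S
    (S : (Fin n → ℝ) → (Fin n → Fin n → ℝ))
    (hS : ∀ x ∈ Ω, ∀ i j : Fin n, S x i j =
      (∑ k : Fin m,
        fderiv ℝ L (u x, Du x) (0, Pi.single k (Pi.single i 1)) * Du x k j) -
        (if i = j then 1 else 0) * L (u x, Du x)) :
    ∀ x ∈ Ω, ∀ j : Fin n, ∑ i : Fin n, pderiv' i (fun x' => S x' i j) x = 0 := by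
  intro x hx j
  have hDuJ : Set.EqOn Du (jacobian u) Ω := fun y hy => funext₂ (hDu y hy)
  have hnhds : Ω ∈ 𝓝 x := hΩ.mem_nhds hx
  have hS' : ∀ i, (fun x' => S x' i j) =ᶠ[𝓝 x] fun x' => energyMomentum L u x' i j :=
    fun i => eventually_of_mem hnhds fun y hy => by
      simp only [hS y hy, hDuJ hy, energyMomentum]
  have hEL' : ∀ k, eulerLagrange L u x k = 0 := fun k => by
    rw [eulerLagrange, sub_eq_zero, ← hDuJ hx, hEL x hx k]
    refine Finset.sum_congr rfl fun i _ => Filter.EventuallyEq.pderiv'_eq ?_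
    exact eventually_of_mem hnhds fun y hy => by simp only [hDuJ hy]
  rw [Finset.sum_congr rfl fun i _ => (hS' i).pderiv'_eq,
    sum_pderiv'_energyMomentum (hL.contDiffAt.of_le (WithTop.coe_le_coe.2 le_top))
      ((hu.contDiffAt hnhds).of_le (WithTop.coe_le_coe.2 le_top))]
  simp [hEL']
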